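/- arXiv:2202.07277 — 3 statements merged into one kernel-verified Lean document; each statement's English description precedes it below -/
import Mathlib

section
/- If (f, Z) and (f', Z') are two deterministic representations of the same stochastic model g with input X = (X₁,…,X_m), then for every subset u ⊆ {1,…,m}, E[f(X,Z) | X_u] = E[f'(X,Z') | X_u] almost surely, and consequently Var(E[f(X,Z) | X_u]) / Var(f(X,Z)) = Var(E[f'(X,Z') | X_u]) / Var(f'(X,Z')); i.e., closed Sobol' indices with respect to groups of uncertain parameters do not depend on the chosen representation. -/
/-!
A conditional expectation given `σ(W)` is pinned down by its integrals over the sets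
`{W ∈ t}`, and `∫_{W ∈ t} Y dμ` is the integral of `(w, y) ↦ y` over `t × ℝ` against the joint
law of `(W, Y)`. Two representations of the same model give the same joint law of `(X, output)`,
hence of `(X_u, output)`, so their conditional expectations given `X_u` agree; the outputs
themselves are identically distributed, so the variances in the Sobol' ratio agree as well.
-/

open MeasureTheory ProbabilityTheory

section

variable {Ω β : Type*} [MeasurableSpace Ω] [MeasurableSpace β] {μ : Measure Ω}
  {W : Ω → β} {Y Y' : Ω → ℝ}

theorem setIntegral_preimage_eq_of_identDistrib_prod
    (h : IdentDistrib (fun ω => (W ω, Y ω)) (fun ω => (W ω, Y' ω)) μ μ)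
    {t : Set β} (ht : MeasurableSet t) :
    ∫ ω in W ⁻¹' t, Y ω ∂μ = ∫ ω in W ⁻¹' t, Y' ω ∂μ := by
  have hlaw : ∀ V : Ω → ℝ, AEMeasurable (fun ω => (W ω, V ω)) μ →
      ∫ ω in W ⁻¹' t, V ω ∂μ = ∫ p in t ×ˢ Set.univ, p.2 ∂μ.map (fun ω => (W ω, V ω)) :=
    fun V hV => by
      rw [setIntegral_map (ht.prod MeasurableSet.univ) measurable_snd.aestronglyMeasurable hV,
        Set.mk_preimage_prod, Set.preimage_univ, Set.inter_univ]
  rw [hlaw Y h.aemeasurable_fst, hlaw Y' h.aemeasurable_snd, h.map_eq]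

theorem condExp_comap_ae_eq_of_identDistrib_prod [IsFiniteMeasure μ] (hW : Measurable W)
    (h : IdentDistrib (fun ω => (W ω, Y ω)) (fun ω => (W ω, Y' ω)) μ μ) :
    μ[Y | MeasurableSpace.comap W inferInstance]
      =ᵐ[μ] μ[Y' | MeasurableSpace.comap W inferInstance] := by
  have hYY' : Integrable Y μ ↔ Integrable Y' μ := (h.comp measurable_snd).integrable_iff
  by_cases hY : Integrable Y μ
  · refine ae_eq_condExp_of_forall_setIntegral_eq hW.comap_le (hYY'.mp hY)
      (fun _ _ _ => integrable_condExp.integrableOn) ?_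
      stronglyMeasurable_condExp.aestronglyMeasurable
    rintro _ ⟨t, ht, rfl⟩ _
    rw [setIntegral_condExp hW.comap_le hY ⟨t, ht, rfl⟩]
    exact setIntegral_preimage_eq_of_identDistrib_prod h ht
  · rw [condExp_of_not_integrable hY, condExp_of_not_integrable (hYY'.not.mp hY)]

end

theorem stmt3_general {Ω 𝒵 𝒵' : Type*} [MeasurableSpace Ω] [MeasurableSpace 𝒵] [MeasurableSpace 𝒵']
    (μ : Measure Ω) [IsProbabilityMeasure μ] {m : ℕ}
    (X : Ω → (Fin m → ℝ)) (Z : Ω → 𝒵) (Z' : Ω → 𝒵')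
    (f : (Fin m → ℝ) → 𝒵 → ℝ) (f' : (Fin m → ℝ) → 𝒵' → ℝ)
    (hX : Measurable X) (hZ : Measurable Z) (hZ' : Measurable Z')
    (hf : Measurable (fun p : (Fin m → ℝ) × 𝒵 => f p.1 p.2))
    (hf' : Measurable (fun p : (Fin m → ℝ) × 𝒵' => f' p.1 p.2))
    -- both pairs represent the same stochastic model: equal joint laws with `X`
    (hrep : μ.map (fun ω => (X ω, f (X ω) (Z ω))) = μ.map (fun ω => (X ω, f' (X ω) (Z' ω))))
    (u : Finset (Fin m)) :
    let mu : MeasurableSpace Ω :=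
      MeasurableSpace.comap (fun ω (j : u) => X ω j) inferInstance
    (μ[(fun ω => f (X ω) (Z ω)) | mu] =ᵐ[μ] μ[(fun ω => f' (X ω) (Z' ω)) | mu]) ∧
    variance (μ[(fun ω => f (X ω) (Z ω)) | mu]) μ / variance (fun ω => f (X ω) (Z ω)) μ
      = variance (μ[(fun ω => f' (X ω) (Z' ω)) | mu]) μ
        / variance (fun ω => f' (X ω) (Z' ω)) μ := by
  dsimp only
  set Y : Ω → ℝ := fun ω => f (X ω) (Z ω)
  set Y' : Ω → ℝ := fun ω => f' (X ω) (Z' ω)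
  have hrestrict : Measurable fun (x : Fin m → ℝ) (j : u) => x j := by fun_prop
  have hjoint : IdentDistrib (fun ω => (X ω, Y ω)) (fun ω => (X ω, Y' ω)) μ μ :=
    ⟨(hX.prodMk (hf.comp (hX.prodMk hZ))).aemeasurable,
      (hX.prodMk (hf'.comp (hX.prodMk hZ'))).aemeasurable, hrep⟩
  have hjoint_u : IdentDistrib (fun ω => ((fun j : u => X ω j), Y ω))
      (fun ω => ((fun j : u => X ω j), Y' ω)) μ μ :=
    hjoint.comp (hrestrict.prodMap measurable_id)
  have hcond : μ[Y | MeasurableSpace.comap (fun ω (j : u) => X ω j) inferInstance]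
      =ᵐ[μ] μ[Y' | MeasurableSpace.comap (fun ω (j : u) => X ω j) inferInstance] :=
    condExp_comap_ae_eq_of_identDistrib_prod (hrestrict.comp hX) hjoint_u
  have hout : IdentDistrib Y Y' μ μ := hjoint.comp measurable_snd
  exact ⟨hcond, by rw [variance_congr hcond, hout.variance_eq]⟩

/-- If `(f, Z)` and `(f', Z')` are two deterministic representations of the same stochastic
model with input `X = (X₁, …, X_m)`, then for every group `u` of inputs the conditional
expectations given `X_u` agree a.s., and the corresponding closed Sobol' indices coincide:
they do not depend on the chosen representation. -/
theorem stmt3 {Ω 𝒵 𝒵' : Type*} [MeasurableSpace Ω] [MeasurableSpace 𝒵] [MeasurableSpace 𝒵']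
    (μ : Measure Ω) [IsProbabilityMeasure μ] {m : ℕ}
    (X : Ω → (Fin m → ℝ)) (Z : Ω → 𝒵) (Z' : Ω → 𝒵')
    (f : (Fin m → ℝ) → 𝒵 → ℝ) (f' : (Fin m → ℝ) → 𝒵' → ℝ)
    (hX : Measurable X) (hZ : Measurable Z) (hZ' : Measurable Z')
    (hf : Measurable (fun p : (Fin m → ℝ) × 𝒵 => f p.1 p.2))
    (hf' : Measurable (fun p : (Fin m → ℝ) × 𝒵' => f' p.1 p.2))
    -- `Z` and `Z'` are independent of the input `X`
    (hXZ : IndepFun X Z μ) (hXZ' : IndepFun X Z' μ)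
    -- both pairs represent the same stochastic model: equal joint laws with `X`
    (hrep : μ.map (fun ω => (X ω, f (X ω) (Z ω))) = μ.map (fun ω => (X ω, f' (X ω) (Z' ω))))
    -- square integrability and positive variance of the outputs
    (hL2 : MemLp (fun ω => f (X ω) (Z ω)) 2 μ)
    (hL2' : MemLp (fun ω => f' (X ω) (Z' ω)) 2 μ)
    (hvar : 0 < variance (fun ω => f (X ω) (Z ω)) μ)
    (hvar' : 0 < variance (fun ω => f' (X ω) (Z' ω)) μ)
    (u : Finset (Fin m)) :
    let mu : MeasurableSpace Ω :=
      MeasurableSpace.comap (fun ω (j : u) => X ω j) inferInstance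
    (μ[(fun ω => f (X ω) (Z ω)) | mu] =ᵐ[μ] μ[(fun ω => f' (X ω) (Z' ω)) | mu]) ∧
    variance (μ[(fun ω => f (X ω) (Z ω)) | mu]) μ / variance (fun ω => f (X ω) (Z ω)) μ
      = variance (μ[(fun ω => f' (X ω) (Z' ω)) | mu]) μ
        / variance (fun ω => f' (X ω) (Z' ω)) μ :=
  stmt3_general μ X Z Z' f f' hX hZ hZ' hf hf' hrep u
end

section
/- Let X be Rademacher (P(X=±1)=1/2) and Z, Z' i.i.d. standard normal, independent of X. Define f(X,Z) = X·Z and f'(X,Z') = X²·Z'. Then E[f(X,Z) | Z] = 0 almost surely while E[f'(X,Z') | Z'] = Z' almost surely; hence the first-order Sobol' index of the intrinsic randomness is S_Z(f) = Var(E[f(X,Z)|Z])/Var(f(X,Z)) = 0 for the first representation and S_{Z'}(f') = Var(E[f'(X,Z')|Z'])/Var(f'(X,Z')) = 1 for the second. -/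
open MeasureTheory ProbabilityTheory
open scoped ENNReal

/-!
Since `X` is independent of `Z` and centred, pulling the `σ(Z)`-measurable factor `Z` out of the
conditional expectation gives `E[XZ | Z] = E[X] Z = 0`. Since `X² = 1` almost surely, `X²Z' = Z'`
almost surely, which is `σ(Z')`-measurable, so `E[X²Z' | Z'] = Z'`. The Sobol' indices are then
`Var 0 / Var(XZ) = 0` and `Var Z' / Var Z' = 1`, the latter because `Var Z' = 1 ≠ 0`.
-/

noncomputable def rademacher : Measure ℝ :=
  (1/2 : ℝ≥0∞) • Measure.dirac 1 + (1/2 : ℝ≥0∞) • Measure.dirac (-1)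

lemma integrable_smul_dirac {c : ℝ≥0∞} (hc : c ≠ ∞) (a : ℝ) :
    Integrable (fun x => x) (c • Measure.dirac a) :=
  (integrable_dirac (by simp)).smul_measure hc

lemma integrable_id_rademacher : Integrable id rademacher :=
  (integrable_smul_dirac (by simp) 1).add_measure (integrable_smul_dirac (by simp) (-1))

lemma integral_id_rademacher : ∫ x, x ∂rademacher = 0 := by
  rw [rademacher, integral_add_measure (integrable_smul_dirac (by simp) 1)
    (integrable_smul_dirac (by simp) (-1)), integral_smul_measure, integral_smul_measure,
    integral_dirac, integral_dirac]
  norm_num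

lemma ae_eq_one_or_eq_neg_one_rademacher : ∀ᵐ x ∂rademacher, x = 1 ∨ x = -1 := by
  simp [rademacher]

lemma integrable_id_gaussianReal (m : ℝ) (v : NNReal) : Integrable id (gaussianReal m v) := by
  simpa using (memLp_id_gaussianReal (μ := m) (v := v) 1).integrable le_rfl

namespace ProbabilityTheory.HasLaw

variable {Ω : Type*} [MeasurableSpace Ω] {μ : Measure Ω} {X : Ω → ℝ}

lemma integrable {ν : Measure ℝ} (hX : HasLaw X ν μ) (hν : Integrable id ν) :
    Integrable X μ :=
  (integrable_map_measure (g := id) (by rw [hX.map_eq]; exact hν.aestronglyMeasurable)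
    hX.aemeasurable).1 (by rwa [hX.map_eq])

lemma sq_eq_one_of_rademacher (hX : HasLaw X rademacher μ) : ∀ᵐ ω ∂μ, X ω ^ 2 = 1 := by
  refine ae_of_ae_map (p := fun x => x ^ 2 = 1) hX.aemeasurable ?_
  filter_upwards [hX.map_eq ▸ ae_eq_one_or_eq_neg_one_rademacher] with x hx
  rcases hx with rfl | rfl <;> norm_num

end ProbabilityTheory.HasLaw

lemma condExp_mul_comap_of_indepFun {Ω : Type*} [MeasurableSpace Ω] {μ : Measure Ω}
    [IsFiniteMeasure μ] {X Z : Ω → ℝ} (hXm : Measurable X) (hZm : Measurable Z)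
    (hX : Integrable X μ) (hZ : Integrable Z μ) (hXZ : IndepFun X Z μ) :
    μ[fun ω => X ω * Z ω | MeasurableSpace.comap Z inferInstance]
      =ᵐ[μ] fun ω => μ[X] * Z ω := by
  have hcondX : μ[X | MeasurableSpace.comap Z inferInstance] =ᵐ[μ] fun _ => μ[X] :=
    condExp_indep_eq hXm.comap_le hZm.comap_le (comap_measurable X).stronglyMeasurable
      ((IndepFun_iff_Indep _ _ _).1 hXZ)
  have hpull : μ[Z * X | MeasurableSpace.comap Z inferInstance]
      =ᵐ[μ] Z * μ[X | MeasurableSpace.comap Z inferInstance] :=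
    condExp_mul_of_stronglyMeasurable_left (comap_measurable Z).stronglyMeasurable
      (by simpa only [mul_comm] using hXZ.integrable_mul hX hZ) hX
  filter_upwards [hpull, hcondX] with ω h1 h2
  rw [show (fun ω => X ω * Z ω) = Z * X from funext fun ω => mul_comm _ _, h1, Pi.mul_apply, h2,
    mul_comm]

/-- With `X` Rademacher and `Z, Z'` i.i.d. standard normal independent of `X`,
for `f(X,Z) = X·Z` and `f'(X,Z') = X²·Z'` we have `E[f(X,Z)|Z] = 0` a.s. and
`E[f'(X,Z')|Z'] = Z'` a.s.; hence the first-order Sobol' index of the intrinsic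
randomness is `0` in the first representation and `1` in the second. -/
theorem stmt5 {Ω : Type*} [MeasurableSpace Ω] (μ : Measure Ω) [IsProbabilityMeasure μ]
    (X Z Z' : Ω → ℝ)
    (hmeas : ∀ i, Measurable (![X, Z, Z'] i))
    (hindep : iIndepFun ![X, Z, Z'] μ)
    (hX : μ.map X = (1/2 : ℝ≥0∞) • Measure.dirac (1 : ℝ)
      + (1/2 : ℝ≥0∞) • Measure.dirac (-1 : ℝ))
    (hZ : μ.map Z = gaussianReal 0 1) (hZ' : μ.map Z' = gaussianReal 0 1) :
    let mZ : MeasurableSpace Ω := MeasurableSpace.comap Z inferInstance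
    let mZ' : MeasurableSpace Ω := MeasurableSpace.comap Z' inferInstance
    (μ[(fun ω => X ω * Z ω) | mZ] =ᵐ[μ] fun _ => 0) ∧
    (μ[(fun ω => (X ω) ^ 2 * Z' ω) | mZ'] =ᵐ[μ] Z') ∧
    variance (μ[(fun ω => X ω * Z ω) | mZ]) μ / variance (fun ω => X ω * Z ω) μ = 0 ∧
    variance (μ[(fun ω => (X ω) ^ 2 * Z' ω) | mZ']) μ
      / variance (fun ω => (X ω) ^ 2 * Z' ω) μ = 1 := by
  have hXm : Measurable X := hmeas 0
  have hZm : Measurable Z := hmeas 1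
  have hZ'm : Measurable Z' := hmeas 2
  have lawX : HasLaw X rademacher μ := ⟨hXm.aemeasurable, hX⟩
  have lawZ : HasLaw Z (gaussianReal 0 1) μ := ⟨hZm.aemeasurable, hZ⟩
  have lawZ' : HasLaw Z' (gaussianReal 0 1) μ := ⟨hZ'm.aemeasurable, hZ'⟩
  have hsq : (fun ω => X ω ^ 2 * Z' ω) =ᵐ[μ] Z' := by
    filter_upwards [lawX.sq_eq_one_of_rademacher] with ω h
    rw [h, one_mul]
  have hcondXZ : μ[fun ω => X ω * Z ω | MeasurableSpace.comap Z inferInstance] =ᵐ[μ] fun _ => 0 := by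
    filter_upwards [condExp_mul_comap_of_indepFun hXm hZm
      (lawX.integrable integrable_id_rademacher) (lawZ.integrable (integrable_id_gaussianReal 0 1))
      (hindep.indepFun (i := 0) (j := 1) (by decide))] with ω h
    rw [h, lawX.integral_eq, integral_id_rademacher, zero_mul]
  have hcondZ' : μ[fun ω => X ω ^ 2 * Z' ω | MeasurableSpace.comap Z' inferInstance] =ᵐ[μ] Z' := by
    refine (condExp_congr_ae hsq).trans (.of_eq ?_)
    exact condExp_of_stronglyMeasurable hZ'm.comap_le (comap_measurable Z').stronglyMeasurable
      (lawZ'.integrable (integrable_id_gaussianReal 0 1))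
  have hvar : variance Z' μ = 1 := by
    rw [lawZ'.variance_eq, variance_id_gaussianReal, NNReal.coe_one]
  -- `mZ` and `mZ'` become local instances once introduced, hiding the ambient σ-algebra.
  intro mZ mZ'
  refine ⟨hcondXZ, hcondZ', ?_, ?_⟩
  · rw [variance_congr hcondXZ, ← Pi.zero_def, variance_zero, zero_div]
  · rw [variance_congr hcondZ', variance_congr hsq, hvar, div_one]
end

section
/- Under the hypotheses of the previous example (X Rademacher, Z, Z' i.i.d. N(0,1) independent of X, f(X,Z)=XZ, f'(X,Z')=X²Z'), the total Sobol' index of X satisfies S_X^T(f) = 1 - S_Z(f) = 1 and S_X^T(f') = 1 - S_{Z'}(f') = 0; thus total Sobol' indices of uncertain parameters may depend on the chosen representation of a stochastic model. -/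
open MeasureTheory ProbabilityTheory
open scoped ENNReal

section
variable {Ω : Type*} [MeasurableSpace Ω] {μ : Measure Ω} {X Z : Ω → ℝ}

lemma ae_sq_eq_one_of_map_eq_rademacher (hX : Measurable X) (h : μ.map X = rademacher) :
    ∀ᵐ ω ∂μ, X ω ^ 2 = 1 := by
  filter_upwards [ae_of_ae_map hX.aemeasurable (h ▸ ae_eq_one_or_eq_neg_one_rademacher)]
    with ω hω
  rcases hω with h | h <;> simp [h]

lemma integral_eq_zero_of_map_eq_rademacher (hX : Measurable X) (h : μ.map X = rademacher) :
    ∫ ω, X ω ∂μ = 0 := by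
  rw [← integral_id_rademacher, ← h]
  exact (integral_map hX.aemeasurable aestronglyMeasurable_id).symm

lemma integrable_of_map_eq_rademacher (hX : Measurable X) (h : μ.map X = rademacher) :
    Integrable X μ :=
  (integrable_map_measure aestronglyMeasurable_id hX.aemeasurable).mp
    (h ▸ integrable_id_rademacher)

lemma memLp_two_of_map_eq_gaussianReal {m : ℝ} {v : NNReal} (hZ : Measurable Z)
    (h : μ.map Z = gaussianReal m v) : MemLp Z 2 μ :=
  (memLp_map_measure_iff aestronglyMeasurable_id hZ.aemeasurable).mp
    (h ▸ memLp_id_gaussianReal 2)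

lemma variance_of_map_eq_gaussianReal {m : ℝ} {v : NNReal} (hZ : Measurable Z)
    (h : μ.map Z = gaussianReal m v) : variance Z μ = v := by
  rw [← variance_id_map hZ.aemeasurable, h, variance_id_gaussianReal]

lemma condExp_mul_comap_eq_integral_mul [IsFiniteMeasure μ] (hXZ : IndepFun X Z μ)
    (hX : Measurable X) (hZ : Measurable Z) (hXi : Integrable X μ) (hZi : Integrable Z μ) :
    μ[(fun ω => X ω * Z ω) | MeasurableSpace.comap Z inferInstance]
      =ᵐ[μ] fun ω => (∫ ω, X ω ∂μ) * Z ω := by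
  have hZsm : StronglyMeasurable[MeasurableSpace.comap Z inferInstance] Z :=
    (comap_measurable Z).stronglyMeasurable
  have hpull := condExp_mul_of_stronglyMeasurable_right hZsm (hXZ.integrable_mul hXi hZi) hXi
  have hX_indep := condExp_indep_eq hX.comap_le hZ.comap_le
    (comap_measurable X).stronglyMeasurable hXZ
  filter_upwards [hpull, hX_indep] with ω h1 h2
  rw [Pi.mul_apply, h2] at h1
  exact h1

end

/-- With `X` Rademacher and `Z, Z'` i.i.d. standard normal independent of `X`,
for `f(X,Z) = X·Z` and `f'(X,Z') = X²·Z'` the total Sobol' index of `X`,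
`S_X^T = 1 - Var(E[Y|Z])/Var(Y)`, equals `1` for the first representation and `0` for
the second: total indices of uncertain parameters depend on the chosen representation. -/
theorem stmt6 {Ω : Type*} [MeasurableSpace Ω] (μ : Measure Ω) [IsProbabilityMeasure μ]
    (X Z Z' : Ω → ℝ)
    (hmeas : ∀ i, Measurable (![X, Z, Z'] i))
    (hindep : iIndepFun ![X, Z, Z'] μ)
    (hX : μ.map X = (1/2 : ℝ≥0∞) • Measure.dirac (1 : ℝ)
      + (1/2 : ℝ≥0∞) • Measure.dirac (-1 : ℝ))
    (hZ : μ.map Z = gaussianReal 0 1) (hZ' : μ.map Z' = gaussianReal 0 1) :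
    let mZ : MeasurableSpace Ω := MeasurableSpace.comap Z inferInstance
    let mZ' : MeasurableSpace Ω := MeasurableSpace.comap Z' inferInstance
    1 - variance (μ[(fun ω => X ω * Z ω) | mZ]) μ / variance (fun ω => X ω * Z ω) μ = 1 ∧
    1 - variance (μ[(fun ω => (X ω) ^ 2 * Z' ω) | mZ']) μ
      / variance (fun ω => (X ω) ^ 2 * Z' ω) μ = 0 := by
  dsimp only
  have hXm : Measurable X := hmeas 0
  have hZm : Measurable Z := hmeas 1
  have hZ'm : Measurable Z' := hmeas 2
  constructor
  · have hXZ : IndepFun X Z μ := by simpa using hindep.indepFun (i := 0) (j := 1) (by decide)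
    have hZi := (memLp_two_of_map_eq_gaussianReal hZm hZ).integrable one_le_two
    have hcond :
        μ[(fun ω => X ω * Z ω) | MeasurableSpace.comap Z inferInstance] =ᵐ[μ] 0 := by
      filter_upwards [condExp_mul_comap_eq_integral_mul hXZ hXm hZm
        (integrable_of_map_eq_rademacher hXm hX) hZi] with ω hω
      rw [hω, integral_eq_zero_of_map_eq_rademacher hXm hX, zero_mul, Pi.zero_apply]
    rw [variance_congr hcond, variance_zero, zero_div, sub_zero]
  · have hX2 : (fun ω => X ω ^ 2 * Z' ω) =ᵐ[μ] Z' := by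
      filter_upwards [ae_sq_eq_one_of_map_eq_rademacher hXm hX] with ω hω
      rw [hω, one_mul]
    have hcond :
        μ[(fun ω => X ω ^ 2 * Z' ω) | MeasurableSpace.comap Z' inferInstance] =ᵐ[μ] Z' := by
      refine (condExp_congr_ae hX2).trans (condExp_of_stronglyMeasurable hZ'm.comap_le
        (comap_measurable Z').stronglyMeasurable ?_).eventuallyEq
      exact (memLp_two_of_map_eq_gaussianReal hZ'm hZ').integrable one_le_two
    rw [variance_congr hcond, variance_congr hX2, variance_of_map_eq_gaussianReal hZ'm hZ',
      NNReal.coe_one, div_one, sub_self]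
end
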